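/- Let A be a bounded linear operator on H with A² = 0. Then for every real number r ≥ 1, ber(A)^{2r} ≤ (1/4)·ber(|A|^{2r} + |A*|^{2r}). -/

import Mathlib

set_option synthInstance.maxHeartbeats 1000000
set_option maxHeartbeats 1000000

open scoped NNReal
open ContinuousLinearMap

/-- The Berezin number of an operator `T`, relative to the family `k` of
(normalized reproducing kernel) vectors indexed by `Ω`. -/
noncomputable def ber {H : Type*} [NormedAddCommGroup H] [InnerProductSpace ℂ H]
    {Ω : Type*} (k : Ω → H) (T : H →L[ℂ] H) : ℝ :=
  ⨆ lam : Ω, ‖(inner ℂ (T (k lam)) (k lam) : ℂ)‖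

/-- The absolute value `|T| = (T*T)^(1/2)` of a bounded operator. -/
noncomputable def opAbs {H : Type*} [NormedAddCommGroup H] [InnerProductSpace ℂ H]
    [CompleteSpace H] (T : H →L[ℂ] H) : H →L[ℂ] H :=
  CFC.sqrt (adjoint T * T)

/-!
Split `x = u + v` with `u ∈ ker A` and `v ⊥ ker A`. Since `A² = 0`, the range of `A` lies in
`ker A`, so `⟪A x, x⟫ = ⟪A x, u⟫ = ⟪v, A† x⟫` and hence
`|⟪A x, x⟫|² ≤ ‖u‖ ‖v‖ ‖A x‖ ‖A† x‖ ≤ ½ ‖A x‖ ‖A† x‖` for `‖x‖ ≤ 1`. Raising to the power `r`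
and using AM-GM gives `|⟪A x, x⟫|^{2r} ≤ ¼ (‖A x‖^{2r} + ‖A† x‖^{2r})`. Finally
`‖A x‖² = ⟪A†A x, x⟫` and `|A|^{2r} = (A†A)^r`, so the Hölder–McCarthy inequality
`⟪S x, x⟫^r ≤ ⟪S^r x, x⟫` (for `S ≥ 0`, `r ≥ 1`, `‖x‖ ≤ 1`) bounds `‖A x‖^{2r}` by
`⟪|A|^{2r} x, x⟫`, and likewise for `A†`.
-/

open scoped InnerProductSpace

/-- The tangent line to the convex function `y ↦ y ^ r` at `t` lies below its graph. -/
theorem Real.mul_rpow_sub_one_mul_le {r t x : ℝ} (hr : 1 ≤ r) (ht : 0 < t) (hx : 0 ≤ x) :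
    r * t ^ (r - 1) * x ≤ x ^ r + (r - 1) * t ^ r := by
  have hB := one_add_mul_self_le_rpow_one_add (s := x / t - 1)
    (by linarith [div_nonneg hx ht.le]) hr
  rw [add_sub_cancel, Real.div_rpow hx ht.le, le_div_iff₀ (by positivity)] at hB
  rw [Real.rpow_sub_one ht.ne', show r * (t ^ r / t) * x = r * t ^ r * (x / t) by ring]
  linear_combination hB

theorem Real.rpow_two_mul_le_of_sq_le_half_mul {m a b r : ℝ} (hm : 0 ≤ m) (ha : 0 ≤ a)
    (hb : 0 ≤ b) (hr : 1 ≤ r) (h : m ^ 2 ≤ a * b / 2) :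
    m ^ (2 * r) ≤ (a ^ (2 * r) + b ^ (2 * r)) / 4 := by
  have h2r : (2 : ℝ) ≤ 2 ^ r := by
    simpa using Real.rpow_le_rpow_of_exponent_le (x := 2) (by norm_num) hr
  simp only [Real.rpow_mul hm, Real.rpow_mul ha, Real.rpow_mul hb, Real.rpow_two,
    ← Real.rpow_pow_comm ha, ← Real.rpow_pow_comm hb]
  calc (m ^ 2) ^ r ≤ (a * b / 2) ^ r := by gcongr
    _ = a ^ r * b ^ r / 2 ^ r := by
      rw [Real.div_rpow (by positivity) zero_le_two, Real.mul_rpow ha hb]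
    _ ≤ a ^ r * b ^ r / 2 := by gcongr
    _ ≤ ((a ^ r) ^ 2 + (b ^ r) ^ 2) / 4 := by nlinarith [sq_nonneg (a ^ r - b ^ r)]

section

variable {H : Type*} [NormedAddCommGroup H] [InnerProductSpace ℂ H]

theorem re_inner_le_re_inner_of_le {S T : H →L[ℂ] H} (h : S ≤ T) (x : H) :
    RCLike.re ⟪S x, x⟫_ℂ ≤ RCLike.re ⟪T x, x⟫_ℂ := by
  have := ((le_def S T).mp h).re_inner_nonneg_left x
  rwa [sub_apply, inner_sub_left, map_sub, sub_nonneg] at this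

end

section

variable {H : Type*} [NormedAddCommGroup H] [InnerProductSpace ℂ H] [CompleteSpace H]

/-- The Hölder–McCarthy inequality: apply the tangent line bound at `t = ⟪S x, x⟫` to the
spectrum of `S` and take the quadratic form at `x`. -/
theorem rpow_re_inner_le_re_inner_rpow {S : H →L[ℂ] H} (hS : 0 ≤ S) {r : ℝ} (hr : 1 ≤ r)
    {x : H} (hx : ‖x‖ ≤ 1) :
    RCLike.re ⟪S x, x⟫_ℂ ^ r ≤ RCLike.re ⟪(S ^ r) x, x⟫_ℂ := by
  have hnonneg (T : H →L[ℂ] H) (hT : 0 ≤ T) : 0 ≤ RCLike.re ⟪T x, x⟫_ℂ :=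
    ((nonneg_iff_isPositive T).mp hT).re_inner_nonneg_left x
  set t := RCLike.re ⟪S x, x⟫_ℂ
  have ht0 : 0 ≤ t := hnonneg S hS
  rcases ht0.eq_or_lt with ht | ht
  · rw [← ht, Real.zero_rpow (by linarith)]
    exact hnonneg _ CFC.rpow_nonneg
  have hcont : ContinuousOn (fun y : ℝ => y ^ r) (spectrum ℝ S) :=
    (Real.continuous_rpow_const (by linarith)).continuousOn
  have htangent : (r * t ^ (r - 1)) • S ≤ S ^ r + algebraMap ℝ _ ((r - 1) * t ^ r) := by
    rw [CFC.rpow_eq_cfc_real hS, ← cfc_const_mul_id (r * t ^ (r - 1)) S,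
      ← cfc_add_const ((r - 1) * t ^ r) (fun y : ℝ => y ^ r) S hcont]
    exact cfc_mono (fun y hy => Real.mul_rpow_sub_one_mul_le hr ht
      (spectrum_nonneg_of_nonneg hS hy)) (by fun_prop) (hcont.add continuousOn_const)
  have := re_inner_le_re_inner_of_le htangent x
  have hsmul (c : ℝ) (y : H) : RCLike.re ⟪c • y, x⟫_ℂ = c * RCLike.re ⟪y, x⟫_ℂ := by
    rw [RCLike.real_smul_eq_coe_smul (K := ℂ), inner_smul_real_left, RCLike.smul_re]
  simp only [add_apply, smul_apply, Algebra.algebraMap_eq_smul_one, one_apply_eq_self,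
    inner_add_left, map_add, hsmul, inner_self_eq_norm_sq] at this
  have htr : t ^ (r - 1) * t = t ^ r := by
    rw [Real.rpow_sub_one ht.ne', div_mul_cancel₀ _ ht.ne']
  have hx2 : ‖x‖ ^ 2 ≤ 1 := pow_le_one₀ (norm_nonneg x) hx
  have hc : 0 ≤ (r - 1) * t ^ r := mul_nonneg (by linarith) (by positivity)
  nlinarith [mul_le_mul_of_nonneg_left hx2 hc]

theorem opAbs_rpow_two_mul (T : H →L[ℂ] H) {r : ℝ} (hr : 0 ≤ r) :
    opAbs T ^ (2 * r) = (adjoint T * T) ^ r := by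
  have hT : 0 ≤ adjoint T * T := by simpa [star_eq_adjoint] using star_mul_self_nonneg T
  rw [opAbs, CFC.sqrt_eq_rpow, CFC.rpow_rpow_of_exponent_nonneg _ _ _ (by norm_num) (by linarith)]
  ring_nf

theorem norm_apply_rpow_le_re_inner_opAbs_rpow (T : H →L[ℂ] H) {r : ℝ} (hr : 1 ≤ r) {x : H}
    (hx : ‖x‖ ≤ 1) : ‖T x‖ ^ (2 * r) ≤ RCLike.re ⟪(opAbs T ^ (2 * r)) x, x⟫_ℂ := by
  have hT : 0 ≤ adjoint T * T := by simpa [star_eq_adjoint] using star_mul_self_nonneg T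
  have hsq : ‖T x‖ ^ 2 = RCLike.re ⟪(adjoint T * T) x, x⟫_ℂ := by
    rw [mul_apply_eq_comp, adjoint_inner_left, inner_self_eq_norm_sq]
  rw [opAbs_rpow_two_mul T (by linarith), Real.rpow_mul (norm_nonneg _), Real.rpow_two, hsq]
  exact rpow_re_inner_le_re_inner_rpow hT hr hx

theorem norm_inner_apply_self_sq_le_of_mul_self_eq_zero {A : H →L[ℂ] H} (hA : A * A = 0) (x : H) :
    ‖⟪A x, x⟫_ℂ‖ ^ 2 ≤ ‖x‖ ^ 2 / 2 * (‖A x‖ * ‖adjoint A x‖) := by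
  set K := LinearMap.ker (A : H →ₗ[ℂ] H)
  have : CompleteSpace K := A.isClosed_ker.completeSpace_coe
  obtain ⟨u, hu, v, hv, rfl⟩ := K.exists_add_mem_mem_orthogonal x
  have hAA : A (A (u + v)) = 0 := by rw [← mul_apply_eq_comp, hA, zero_apply]
  have hu_left : ⟪A (u + v), u + v⟫_ℂ = ⟪A (u + v), u⟫_ℂ := by
    rw [inner_add_right, Submodule.inner_right_of_mem_orthogonal hAA hv, add_zero]
  have hv_right : ⟪A (u + v), u + v⟫_ℂ = ⟪v, adjoint A (u + v)⟫_ℂ := by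
    rw [map_add A, show A u = 0 from hu, zero_add, adjoint_inner_right]
  have hpyth : ‖u + v‖ * ‖u + v‖ = ‖u‖ * ‖u‖ + ‖v‖ * ‖v‖ :=
    norm_add_sq_eq_norm_sq_add_norm_sq_of_inner_eq_zero _ _
      (Submodule.inner_right_of_mem_orthogonal hu hv)
  calc ‖⟪A (u + v), u + v⟫_ℂ‖ ^ 2
      = ‖⟪A (u + v), u⟫_ℂ‖ * ‖⟪v, adjoint A (u + v)⟫_ℂ‖ := by
        rw [sq]; nth_rewrite 1 [hu_left]; rw [hv_right]
    _ ≤ (‖A (u + v)‖ * ‖u‖) * (‖v‖ * ‖adjoint A (u + v)‖) := by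
        gcongr <;> exact norm_inner_le_norm _ _
    _ = (‖u‖ * ‖v‖) * (‖A (u + v)‖ * ‖adjoint A (u + v)‖) := by ring
    _ ≤ ‖u + v‖ ^ 2 / 2 * (‖A (u + v)‖ * ‖adjoint A (u + v)‖) := by
        gcongr
        rw [sq, hpyth]
        nlinarith [sq_nonneg (‖u‖ - ‖v‖)]

theorem norm_inner_rpow_le_re_inner_opAbs_rpow_of_mul_self_eq_zero {A : H →L[ℂ] H}
    (hA : A * A = 0) {r : ℝ} (hr : 1 ≤ r) {x : H} (hx : ‖x‖ ≤ 1) :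
    ‖⟪A x, x⟫_ℂ‖ ^ (2 * r) ≤
      1 / 4 * RCLike.re ⟪(opAbs A ^ (2 * r) + opAbs (adjoint A) ^ (2 * r)) x, x⟫_ℂ := by
  have hsq : ‖⟪A x, x⟫_ℂ‖ ^ 2 ≤ ‖A x‖ * ‖adjoint A x‖ / 2 := by
    have hx2 : ‖x‖ ^ 2 ≤ 1 := pow_le_one₀ (norm_nonneg x) hx
    nlinarith [norm_inner_apply_self_sq_le_of_mul_self_eq_zero hA x,
      mul_nonneg (norm_nonneg (A x)) (norm_nonneg (adjoint A x))]
  have hA₁ := norm_apply_rpow_le_re_inner_opAbs_rpow A hr hx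
  have hA₂ := norm_apply_rpow_le_re_inner_opAbs_rpow (adjoint A) hr hx
  rw [add_apply, inner_add_left, map_add]
  linarith [Real.rpow_two_mul_le_of_sq_le_half_mul (norm_nonneg _) (norm_nonneg _)
    (norm_nonneg _) hr hsq]

end

section

variable {H : Type*} [NormedAddCommGroup H] [InnerProductSpace ℂ H] {Ω : Type*} (k : Ω → H)

theorem ber_nonneg (T : H →L[ℂ] H) : 0 ≤ ber k T :=
  Real.iSup_nonneg fun _ => norm_nonneg _

theorem norm_inner_le_ber (hk : ∀ lam, ‖k lam‖ ≤ 1) (T : H →L[ℂ] H) (lam : Ω) :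
    ‖⟪T (k lam), k lam⟫_ℂ‖ ≤ ber k T := by
  refine le_ciSup (f := fun lam => ‖⟪T (k lam), k lam⟫_ℂ‖) ⟨‖T‖, ?_⟩ lam
  rintro _ ⟨mu, rfl⟩
  calc ‖⟪T (k mu), k mu⟫_ℂ‖ ≤ ‖T‖ * ‖k mu‖ * ‖k mu‖ :=
        (norm_inner_le_norm _ _).trans (by gcongr; exact T.le_opNorm _)
    _ ≤ ‖T‖ * 1 * 1 := by gcongr <;> exact hk mu
    _ = ‖T‖ := by ring

theorem ber_rpow_le {T : H →L[ℂ] H} {p b : ℝ} (hp : 0 < p) (hb : 0 ≤ b)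
    (h : ∀ lam, ‖⟪T (k lam), k lam⟫_ℂ‖ ^ p ≤ b) : ber k T ^ p ≤ b := by
  rw [← Real.le_rpow_inv_iff_of_pos (ber_nonneg k T) hb hp]
  exact Real.iSup_le (fun lam => (Real.le_rpow_inv_iff_of_pos (norm_nonneg _) hb hp).2 (h lam))
    (by positivity)

end

theorem berezin_power_inequality_square_zero_general
    {H : Type*} [NormedAddCommGroup H] [InnerProductSpace ℂ H] [CompleteSpace H]
    {Ω : Type*} (k : Ω → H) (hk : ∀ lam, ‖k lam‖ = 1)
    (A : H →L[ℂ] H) (hA : A * A = 0) (r : ℝ) (hr : 1 ≤ r) :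
    ber k A ^ (2 * r) ≤
      (1 / 4 : ℝ) * ber k (CFC.rpow (opAbs A) (2 * r)
        + CFC.rpow (opAbs (adjoint A)) (2 * r)) := by
  have hk' : ∀ lam, ‖k lam‖ ≤ 1 := fun lam => (hk lam).le
  refine ber_rpow_le k (by positivity) (mul_nonneg (by norm_num) (ber_nonneg k _)) fun lam => ?_
  calc ‖⟪A (k lam), k lam⟫_ℂ‖ ^ (2 * r)
      ≤ 1 / 4 * RCLike.re ⟪(opAbs A ^ (2 * r) + opAbs (adjoint A) ^ (2 * r)) (k lam), k lam⟫_ℂ :=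
        norm_inner_rpow_le_re_inner_opAbs_rpow_of_mul_self_eq_zero hA hr (hk' lam)
    _ ≤ 1 / 4 * ber k (opAbs A ^ (2 * r) + opAbs (adjoint A) ^ (2 * r)) := by
        gcongr
        exact (RCLike.re_le_norm _).trans (norm_inner_le_ber k hk' _ lam)

theorem berezin_power_inequality_square_zero
    {H : Type*} [NormedAddCommGroup H] [InnerProductSpace ℂ H] [CompleteSpace H]
    {Ω : Type*} [Nonempty Ω] (k : Ω → H) (hk : ∀ lam, ‖k lam‖ = 1)
    (A : H →L[ℂ] H) (hA : A * A = 0) (r : ℝ) (hr : 1 ≤ r) :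
    ber k A ^ (2 * r) ≤
      (1 / 4 : ℝ) * ber k (CFC.rpow (opAbs A) (2 * r)
        + CFC.rpow (opAbs (adjoint A)) (2 * r)) :=
  berezin_power_inequality_square_zero_general k hk A hA r hr
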